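/- Let F : ℝⁿ × U → ℝ with U a compact set, and suppose that for fixed parameters the minimizer π = argmin_{u∈U} F(χ, u) is unique and F(·, u) is differentiable at χ for each u with continuous joint dependence. Then the value function φ(χ) = min_{u∈U} F(χ, u) is differentiable at χ with gradient φ'(χ) = F_χ(χ, π). -/

import Mathlib

/-!
The minimum `φ x = F x (m x)`, for any choice of minimizers `m x`, is squeezed between
`F x (m x) - F χ (m x)` and `F x π - F χ π` (after subtracting `φ χ = F χ π`), because `m x`
minimizes at `x` and `π` minimizes at `χ`. Compactness and uniqueness of `π` force `m x → π`,
so by the mean value inequality and continuity of `D` at `(χ, π)` both bounds equal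
`D χ π (x - χ)` up to `o(‖x - χ‖)`.
-/

open Filter Topology Asymptotics Function

theorem ciInf_eq_of_forall_le {ι α : Type*} [ConditionallyCompleteLattice α] {f : ι → α}
    {i₀ : ι} (h : ∀ i, f i₀ ≤ f i) : ⨅ i, f i = f i₀ :=
  have : Nonempty ι := ⟨i₀⟩
  le_antisymm (ciInf_le ⟨f i₀, Set.forall_mem_range.2 h⟩ i₀) (le_ciInf h)

theorem isLittleO_of_le_of_le {β E : Type*} [Norm E] {l : Filter β} {f a b : β → ℝ}
    {g : β → E} (ha : a =o[l] g) (hb : b =o[l] g) (haf : ∀ᶠ x in l, a x ≤ f x)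
    (hfb : ∀ᶠ x in l, f x ≤ b x) : f =o[l] g := by
  refine isLittleO_iff.2 fun ε hε => ?_
  filter_upwards [ha.def hε, hb.def hε, haf, hfb] with x hax hbx hafx hfbx
  simp only [Real.norm_eq_abs] at *
  exact (abs_le_max_abs_abs hafx hfbx).trans (max_le hax hbx)

theorem tendsto_minimizer_of_unique_min {X U α : Type*} [TopologicalSpace X]
    [TopologicalSpace U] [CompactSpace U] [LinearOrder α] [TopologicalSpace α]
    [OrderClosedTopology α] {F : X → U → α} (hF : Continuous (uncurry F)) {χ : X} {π : U}
    (hπ : ∀ u ≠ π, F χ π < F χ u) {m : X → U} (hm : ∀ x v, F x (m x) ≤ F x v) :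
    Tendsto m (𝓝 χ) (𝓝 π) := by
  refine tendsto_nhds.2 fun s hs hπs => ?_
  have hK : IsCompact sᶜ := hs.isClosed_compl.isCompact
  have hbeat : ∀ᶠ x in 𝓝 χ, ∀ u ∈ sᶜ, F x π < F x u := by
    refine hK.eventually_forall_of_forall_eventually fun u hu => ?_
    have hopen : IsOpen {p : X × U | F p.1 π < F p.1 p.2} :=
      isOpen_lt (hF.comp (continuous_fst.prodMk continuous_const)) hF
    exact hopen.mem_nhds (hπ u fun h => hu (h ▸ hπs))
  filter_upwards [hbeat] with x hx
  by_contra hmx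
  exact (hx (m x) hmx).not_ge (hm x π)

theorem isLittleO_sub_sub_fderiv_of_tendsto {E U G : Type*} [NormedAddCommGroup E]
    [NormedSpace ℝ E] [TopologicalSpace U] [NormedAddCommGroup G] [NormedSpace ℝ G]
    {F : E → U → G} {D : E → U → E →L[ℝ] G} {χ : E} {π : U}
    (hD : ∀ x u, HasFDerivAt (F · u) (D x u) x) (hDcont : ContinuousAt (uncurry D) (χ, π))
    {g : E → U} (hg : Tendsto g (𝓝 χ) (𝓝 π)) :
    (fun x => F x (g x) - F χ (g x) - D χ π (x - χ)) =o[𝓝 χ] fun x => x - χ := by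
  refine isLittleO_iff.2 fun ε hε => ?_
  have hclose : ∀ᶠ p in 𝓝 (χ, π), ‖uncurry D p - D χ π‖ ≤ ε := by
    filter_upwards [hDcont.eventually (Metric.closedBall_mem_nhds _ hε)] with p hp
    rwa [dist_eq_norm] at hp
  rw [nhds_prod_eq] at hclose
  obtain ⟨δ, hδ, V, hV, hDV⟩ := Metric.eventually_nhds_prod_iff.1 hclose
  filter_upwards [Metric.ball_mem_nhds χ hδ, hg.eventually hV] with x hx hgx
  exact (convex_ball χ δ).norm_image_sub_le_of_norm_hasFDerivWithin_le'
    (fun ξ _ => (hD ξ (g x)).hasFDerivWithinAt) (fun ξ hξ => hDV hξ hgx)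
    (Metric.mem_ball_self hδ) hx

theorem stmt12_general {n : ℕ} (U : Type*) [MetricSpace U] [CompactSpace U]
    (F : EuclideanSpace ℝ (Fin n) → U → ℝ)
    (D : EuclideanSpace ℝ (Fin n) → U → (EuclideanSpace ℝ (Fin n) →L[ℝ] ℝ))
    (hF : Continuous fun p : EuclideanSpace ℝ (Fin n) × U => F p.1 p.2)
    (hD : ∀ x u, HasFDerivAt (fun x => F x u) (D x u) x)
    (hDcont : Continuous fun p : EuclideanSpace ℝ (Fin n) × U => D p.1 p.2)
    (χ : EuclideanSpace ℝ (Fin n)) (π : U)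
    (hmin : ∀ u, F χ π ≤ F χ u)
    (huniq : ∀ u, F χ u = F χ π → u = π) :
    HasFDerivAt (fun x => ⨅ u : U, F x u) (D χ π) χ := by
  have hπ : ∀ u ≠ π, F χ π < F χ u := fun u hu =>
    (hmin u).lt_of_ne fun h => hu (huniq u h.symm)
  -- `cocompact U = ⊥`, so the growth condition of `exists_forall_le'` is vacuous
  have hex : ∀ x, ∃ u, ∀ v, F x u ≤ F x v := fun x =>
    (hF.comp (.prodMk_right x)).exists_forall_le' π (by simp)
  choose m hm using hex
  have hlower := isLittleO_sub_sub_fderiv_of_tendsto hD hDcont.continuousAt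
    (tendsto_minimizer_of_unique_min hF hπ hm)
  have hupper := isLittleO_sub_sub_fderiv_of_tendsto (χ := χ) (g := fun _ => π) hD
    hDcont.continuousAt tendsto_const_nhds
  rw [hasFDerivAt_iff_isLittleO]
  refine isLittleO_of_le_of_le hlower hupper (.of_forall fun x => ?_) (.of_forall fun x => ?_)
  all_goals
    rw [ciInf_eq_of_forall_le hmin, ciInf_eq_of_forall_le (hm x)]
    linarith [hm x π, hmin (m x)]

/-- Danskin's theorem with a unique minimizer: let `U` be a compact metric space, let
`F : ℝⁿ × U → ℝ` be continuous, with `F (·, u)` differentiable (with derivative `D x u`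
depending continuously on `(x, u)`), and suppose the minimizer `π` of `u ↦ F χ u` is
unique.  Then the value function `φ(χ) = min_{u ∈ U} F χ u` is differentiable at `χ` with
gradient `F_χ(χ, π) = D χ π`. -/
theorem stmt12 {n : ℕ} (U : Type*) [MetricSpace U] [CompactSpace U] [Nonempty U]
    (F : EuclideanSpace ℝ (Fin n) → U → ℝ)
    (D : EuclideanSpace ℝ (Fin n) → U → (EuclideanSpace ℝ (Fin n) →L[ℝ] ℝ))
    (hF : Continuous fun p : EuclideanSpace ℝ (Fin n) × U => F p.1 p.2)
    (hD : ∀ x u, HasFDerivAt (fun x => F x u) (D x u) x)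
    (hDcont : Continuous fun p : EuclideanSpace ℝ (Fin n) × U => D p.1 p.2)
    (χ : EuclideanSpace ℝ (Fin n)) (π : U)
    (hmin : ∀ u, F χ π ≤ F χ u)
    (huniq : ∀ u, F χ u = F χ π → u = π) :
    HasFDerivAt (fun x => ⨅ u : U, F x u) (D χ π) χ :=
  stmt12_general U F D hF hD hDcont χ π hmin huniq
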